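/- If $G$ is a non-trivial group, then the quandle ring $\mathbf{k}[\operatorname{Conj}(G)]$ contains a non-trivial idempotent. -/

import Mathlib

/-- The conjugation quandle of a group: same carrier, operation `x * y = y x y⁻¹`. -/
def ConjQ (G : Type*) := G

instance {G : Type*} [Group G] : Mul (ConjQ G) :=
  ⟨fun x y => show G from (show G from y) * (show G from x) * (show G from y)⁻¹⟩

/-! If `g ≠ 1`, then `1` and `g` commute, so they span a trivial subquandle of `Conj(G)`:
`x * y = x` for `x, y ∈ {1, g}`. Over such a subquandle every affine combination
`a e₁ + (1 - a) e_g` is idempotent, and for `a ∉ {0, 1}` its coefficient `a` at `1` shows that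
it is neither `0` nor a basis element. -/

namespace ConjQ

variable {G : Type*}

def of : G ≃ ConjQ G := Equiv.refl G

variable [Group G]

lemma of_mul_of_of_commute {x y : G} (h : Commute x y) : of x * of y = of x :=
  show y * x * y⁻¹ = x by rw [← h.eq, mul_inv_cancel_right]

end ConjQ

namespace MonoidAlgebra

variable {k M : Type*}

lemma isIdempotentElem_single_add_single [Semiring k] [Mul M] {x y : M}
    (hxx : x * x = x) (hxy : x * y = x) (hyx : y * x = y) (hyy : y * y = y)
    {a b : k} (hab : a + b = 1) :
    IsIdempotentElem (single x a + single y b) := by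
  have hsum : ∀ c : k, c * a + c * b = c := fun c => by rw [← mul_add, hab, mul_one]
  simp only [IsIdempotentElem, add_mul, mul_add, single_mul_single, hxx, hxy, hyx, hyy]
  rw [add_add_add_comm, ← single_add, ← single_add, hsum, hsum]

lemma coeff_single_add_single_left [Semiring k] {x y : M} (hxy : x ≠ y) (a b : k) :
    (single x a + single y b).coeff x = a := by
  simp [coeff_add, hxy.symm]

lemma coeff_single_one_eq_zero_or_eq_one [Semiring k] (w x : M) :
    (single w (1 : k)).coeff x = 0 ∨ (single w (1 : k)).coeff x = 1 := by
  classical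
  rw [coeff_single, Finsupp.single_apply]
  split_ifs <;> simp

lemma ne_single_one_of_coeff_ne [Semiring k] {u : MonoidAlgebra k M} {x : M}
    (h0 : u.coeff x ≠ 0) (h1 : u.coeff x ≠ 1) (w : M) : u ≠ single w 1 := by
  rintro rfl
  exact (coeff_single_one_eq_zero_or_eq_one w x).elim h0 h1

end MonoidAlgebra

theorem stmt6_general {G : Type*} [Group G] [Nontrivial G] (k : Type*) [CommRing k]
    (hk : ∃ a : k, a ≠ 0 ∧ a ≠ 1) :
    ∃ u : MonoidAlgebra k (ConjQ G), u * u = u ∧ u ≠ 0 ∧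
      ∀ x : ConjQ G, u ≠ MonoidAlgebra.single x (1 : k) := by
  obtain ⟨a, ha0, ha1⟩ := hk
  obtain ⟨g, hg⟩ := exists_ne (1 : G)
  have h1g : ConjQ.of 1 ≠ ConjQ.of g := ConjQ.of.injective.ne hg.symm
  have hcoeff := MonoidAlgebra.coeff_single_add_single_left h1g a (1 - a)
  refine ⟨.single (ConjQ.of 1) a + .single (ConjQ.of g) (1 - a), ?_, ?_, ?_⟩
  · exact MonoidAlgebra.isIdempotentElem_single_add_single
      (ConjQ.of_mul_of_of_commute (.refl (1 : G))) (ConjQ.of_mul_of_of_commute (.one_left g))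
      (ConjQ.of_mul_of_of_commute (.one_right g)) (ConjQ.of_mul_of_of_commute (.refl g))
      (add_sub_cancel a 1)
  · exact fun h => ha0 (by rw [← hcoeff, h, MonoidAlgebra.coeff_zero, Finsupp.zero_apply])
  · exact MonoidAlgebra.ne_single_one_of_coeff_ne (hcoeff.trans_ne ha0) (hcoeff.trans_ne ha1)

/-- For a non-trivial group `G`, the quandle ring `k[Conj(G)]` has a non-trivial idempotent. -/
theorem stmt6 {G : Type*} [Group G] [Nontrivial G] (k : Type*) [CommRing k] [IsDomain k]
    (hk : ∃ a : k, a ≠ 0 ∧ a ≠ 1) :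
    ∃ u : MonoidAlgebra k (ConjQ G), u * u = u ∧ u ≠ 0 ∧
      ∀ x : ConjQ G, u ≠ MonoidAlgebra.single x (1 : k) :=
  stmt6_general k hk
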